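/- Let c be an admissible coefficient function satisfying (Cubic values). Let γ ∈ ℤ^{μ_A−2} be non-negative with |γ| = 4 and γ − e_{i_1,j_1} − e_{i_2,j_2} ≥ 0 for some (i_1,j_1), (i_2,j_2) with i_1 ≠ i_2. If a_{i_1} ≥ 3, then c(γ,0) = 0. -/

import Mathlib

/- Common framework: Frobenius manifolds for orbifold projective lines ℙ¹_A,
   following Ishibashi–Shiraishi–Takahashi. -/

namespace FrobeniusUniqueness

/-- A point index `(i, j)` labelling a flat coordinate `t_{i,j}`. -/
abbrev Pt : Type := Fin 3 × ℕ

/-- A non-negative element of `ℤ^{μ_A − 2}`: an exponent vector `α` with `α_{i,j} ∈ ℕ`. -/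
abbrev Expv : Type := Pt →₀ ℕ

/-- The standard basis vector `e_{i,j}`. -/
noncomputable def e (i : Fin 3) (j : ℕ) : Expv := Finsupp.single (i, j) 1

/-- The length `|α|` of an exponent vector. -/
def len (α : Expv) : ℕ := α.sum fun _ n => n

/-- A point index `(i,j)` is valid if `1 ≤ j ≤ a_i − 1`. -/
def ValidPt (A : Fin 3 → ℕ) (p : Pt) : Prop := 1 ≤ p.2 ∧ p.2 ≤ A p.1 - 1

/-- An exponent vector lies in `ℤ^{μ_A − 2}` iff it is supported on valid indices. -/
def Valid (A : Fin 3 → ℕ) (α : Expv) : Prop := ∀ p ∈ α.support, ValidPt A p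

/-- The combinatorial factor `s_{a,b,c}`. -/
def sFactor (a b c : ℕ) : ℂ :=
  if a = b ∧ b = c then 6
  else if a ≠ b ∧ b ≠ c ∧ a ≠ c then 1
  else 2

/-- The index type for the flat coordinates `t_1`, `t_{i,j}`, `t_{μ_A}`. -/
inductive Idx : Type where
  | one : Idx
  | pt : Fin 3 → ℕ → Idx
  | mu : Idx
deriving DecidableEq

/-- Validity of a flat coordinate index. -/
def ValidIdx (A : Fin 3 → ℕ) : Idx → Prop
  | .one => True
  | .pt i j => ValidPt A (i, j)
  | .mu => True

/-- The metric `η` in the frame `∂_1, ∂_{i,j}, ∂_{μ_A}`. -/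
noncomputable def eta (A : Fin 3 → ℕ) : Idx → Idx → ℂ
  | .one, .mu => 1
  | .mu, .one => 1
  | .pt i j, .pt i' j' =>
      if i = i' ∧ j + j' = A i ∧ 1 ≤ j ∧ j ≤ A i - 1 then (A i : ℂ)⁻¹ else 0
  | _, _ => 0

/-- The point indices occurring in an `Idx`. -/
def ptsOf : Idx → List Pt
  | .pt i j => [(i, j)]
  | _ => []

/-- The number of occurrences of `μ_A` in an `Idx`. -/
def muCount : Idx → ℕ
  | .mu => 1
  | _ => 0

/-- The factor produced when the monomial `t^{β + Σ_{p ∈ ps} e_p}` is differentiated by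
`∏_{p ∈ ps} ∂_p`, leaving the monomial `t^β`. -/
noncomputable def dfac (β : Expv) : List Pt → ℕ
  | [] => 1
  | p :: ps =>
      ((β + ((ps.map fun q => (Finsupp.single q 1 : Expv)).sum) + Finsupp.single p 1 : Expv) p)
        * dfac β ps

/-- `der A c a b d β m` is the coefficient of `t^β · e^{m·t_{μ_A}}` in `∂_a ∂_b ∂_d F`, where
`F = (1/2)t_1²t_{μ_A} + (1/2)t_1·Σ_{i,j}(1/a_i)t_{i,j}t_{i,a_i−j} + Σ_{α,m} c(α,m)t^α e^{m t_{μ_A}}`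
is the potential of the coefficient function `c`.  In particular `∂_1∂_a∂_b F = η(∂_a,∂_b)`. -/
noncomputable def der (A : Fin 3 → ℕ) (c : Expv → ℕ → ℂ) (a b d : Idx) (β : Expv) (m : ℕ) : ℂ :=
  if a = .one then (if β = 0 ∧ m = 0 then eta A b d else 0)
  else if b = .one then (if β = 0 ∧ m = 0 then eta A a d else 0)
  else if d = .one then (if β = 0 ∧ m = 0 then eta A a b else 0)
  else
    (m : ℂ) ^ (muCount a + muCount b + muCount d) *
      (dfac β (ptsOf a ++ ptsOf b ++ ptsOf d) : ℂ) *
      c (β + (((ptsOf a ++ ptsOf b ++ ptsOf d).map fun q => (Finsupp.single q 1 : Expv)).sum)) m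

/-- The coefficient of `t^β · e^{m·t_{μ_A}}` in
`Σ_{σ,τ} ∂_a∂_b∂_σF · η^{στ} · ∂_τ∂_d∂_e F`, where `(η^{στ})` is the inverse matrix of
`(η_{στ})` (so the only nonzero entries are `η^{1,μ_A} = η^{μ_A,1} = 1` and
`η^{(i,j),(i,a_i−j)} = a_i`). -/
noncomputable def quadTerm (A : Fin 3 → ℕ) (c : Expv → ℕ → ℂ) (a b d e' : Idx)
    (β : Expv) (m : ℕ) : ℂ :=
  ∑ x ∈ Finset.HasAntidiagonal.antidiagonal β, ∑ y ∈ Finset.HasAntidiagonal.antidiagonal m,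
    (der A c a b .one x.1 y.1 * der A c .mu d e' x.2 y.2
     + der A c a b .mu x.1 y.1 * der A c .one d e' x.2 y.2
     + ∑ i : Fin 3, ∑ j ∈ Finset.Icc 1 (A i - 1),
         (A i : ℂ) * der A c a b (.pt i j) x.1 y.1 * der A c (.pt i (A i - j)) d e' x.2 y.2)

/-- `χ_A = 1/a_1 + 1/a_2 + 1/a_3 − 1`. -/
noncomputable def chi (A : Fin 3 → ℕ) : ℚ := (A 0 : ℚ)⁻¹ + (A 1 : ℚ)⁻¹ + (A 2 : ℚ)⁻¹ - 1

/-- The degree of the monomial `t^α`: `Σ_{i,j} α_{i,j}·(a_i − j)/a_i`. -/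
noncomputable def deg (A : Fin 3 → ℕ) (α : Expv) : ℚ :=
  α.sum fun p n => (n : ℚ) * (((A p.1 : ℚ) - (p.2 : ℚ)) / (A p.1 : ℚ))

/-- A coefficient function is admissible if it satisfies (Homogeneity) and the WDVV
equations (coefficientwise, in the variables `t_{i,j}` and `e^{t_{μ_A}}`). -/
structure IsAdmissible (A : Fin 3 → ℕ) (c : Expv → ℕ → ℂ) : Prop where
  homog : ∀ α : Expv, Valid A α → ∀ m : ℕ, c α m ≠ 0 → deg A α + (m : ℚ) * chi A = 2
  wdvv : ∀ a b d e' : Idx, ValidIdx A a → ValidIdx A b → ValidIdx A d → ValidIdx A e' →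
      ∀ β : Expv, Valid A β → ∀ m : ℕ,
        quadTerm A c a b d e' β m = quadTerm A c a d b e' β m

/-- (Cubic values). -/
def CubicValues (A : Fin 3 → ℕ) (c : Expv → ℕ → ℂ) : Prop :=
  (∀ (i₁ i₂ i₃ : Fin 3) (j₁ j₂ j₃ : ℕ),
      ValidPt A (i₁, j₁) → ValidPt A (i₂, j₂) → ValidPt A (i₃, j₃) →
      ¬(i₁ = i₂ ∧ i₂ = i₃) → c (e i₁ j₁ + e i₂ j₂ + e i₃ j₃) 0 = 0) ∧
  (∀ (i : Fin 3) (j₁ j₂ j₃ : ℕ),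
      ValidPt A (i, j₁) → ValidPt A (i, j₂) → ValidPt A (i, j₃) →
      sFactor j₁ j₂ j₃ * c (e i j₁ + e i j₂ + e i j₃) 0 =
        if j₁ + j₂ + j₃ = A i then (A i : ℂ)⁻¹ else 0)

/-- (Normalization). -/
def Normalization (A : Fin 3 → ℕ) (c : Expv → ℕ → ℂ) : Prop :=
  (2 ≤ A 0 → c (e 0 1 + e 1 1 + e 2 1) 1 = 1) ∧
  (A 0 = 1 → A 0 < A 1 → c (e 1 1 + e 2 1) 1 = 1) ∧
  (A 0 = 1 → A 1 = 1 → A 1 < A 2 → c (e 2 1) 1 = 1) ∧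
  (A 0 = 1 → A 1 = 1 → A 2 = 1 → c 0 1 = 1)

/-- (Separation). -/
def Separation (A : Fin 3 → ℕ) (c : Expv → ℕ → ℂ) : Prop :=
  ∀ γ : Expv, Valid A γ →
    ∀ (i₁ i₂ : Fin 3) (j₁ j₂ : ℕ), i₁ ≠ i₂ → ValidPt A (i₁, j₁) → ValidPt A (i₂, j₂) →
      e i₁ j₁ + e i₂ j₂ ≤ γ → c γ 0 = 0

/-- The automorphism of `ℤ^{μ_A−2}` exchanging `e_{i₁,j}` and `e_{i₂,j}` for all `j`. -/
def swapExp (i₁ i₂ : Fin 3) (α : Expv) : Expv :=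
  Finsupp.equivMapDomain ((Equiv.swap i₁ i₂).prodCongr (Equiv.refl ℕ)) α

/-- (Symmetry). -/
def Symmetry (A : Fin 3 → ℕ) (c : Expv → ℕ → ℂ) : Prop :=
  ∀ i₁ i₂ : Fin 3, A i₁ = A i₂ → ∀ α : Expv, Valid A α → ∀ m : ℕ,
    c (swapExp i₁ i₂ α) m = c α m

/-!
Take WDVV for four point indices `p, q, D, E` at the coefficient of `t^{e_r}` with `m = 0`. All
terms through `∂_{μ_A}` vanish, and by (Cubic values) contracting a cubic term with `η^{στ}`
fuses two indices `(i, j), (i, j')` of one branch into `(i, j + j')`, which exists only when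
`j + j' < a_i`. Up to nonzero factors, WDVV then says that the coefficient of
`e_r + e_p + e_q + e_{D+E}` plus that of `e_r + e_{p+q} + e_D + e_E` equals the same pair of
terms with `q` and `D` exchanged.

Let `D + E` be a splitting of one point of `γ`. Then `c(γ, 0) = 0` as soon as each of the other
three fused terms is absent (the two indices lie on different branches, or their sum overflows
to `j + j' ≥ a_i`) or has already been shown to vanish. By homogeneity the four points `(i, j)`
of `γ` satisfy `Σ j / a_i = 2`. Together with `a_{i₁} ≥ 3`, this leaves only a few shapes: the
points meet all three branches, or they split 2 + 2, 1 + 3 or 3 + 1 between the branches `i₁` and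
`i₂`. For each shape there is a splitting that works.
-/

def Fusable (A : Fin 3 → ℕ) (P Q : Pt) : Prop := P.1 = Q.1 ∧ P.2 + Q.2 < A P.1

instance (A : Fin 3 → ℕ) (P Q : Pt) : Decidable (Fusable A P Q) :=
  inferInstanceAs (Decidable (_ ∧ _))

def fuse (P Q : Pt) : Pt := (P.1, P.2 + Q.2)

noncomputable def quartic (P Q R S : Pt) : Expv :=
  Finsupp.single P 1 + Finsupp.single Q 1 + Finsupp.single R 1 + Finsupp.single S 1

noncomputable def weight (A : Fin 3 → ℕ) (P : Pt) : ℚ := P.2 / A P.1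

section ExponentVectors

variable {A : Fin 3 → ℕ}

lemma len_add (α β : Expv) : len (α + β) = len α + len β :=
  Finsupp.sum_add_index' (fun _ => rfl) (fun _ _ _ => rfl)

lemma len_single (P : Pt) (n : ℕ) : len (Finsupp.single P n) = n :=
  Finsupp.sum_single_index rfl

lemma exists_eq_single_add_single {δ : Expv} (h : len δ = 2) :
    ∃ P Q : Pt, δ = Finsupp.single P 1 + Finsupp.single Q 1 := by
  have hcard : Multiset.card (Finsupp.toMultiset δ) = 2 := by
    rw [Finsupp.card_toMultiset]; exact h
  obtain ⟨P, Q, hPQ⟩ := Multiset.card_eq_two.mp hcard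
  classical
  refine ⟨P, Q, ?_⟩
  rw [← Finsupp.toMultiset_toFinsupp δ, hPQ, Multiset.insert_eq_cons, ← Multiset.singleton_add,
    Multiset.toFinsupp_add, Multiset.toFinsupp_singleton, Multiset.toFinsupp_singleton]

lemma exists_eq_quartic {γ : Expv} {P Q : Pt} (hlen : len γ = 4)
    (hle : Finsupp.single P 1 + Finsupp.single Q 1 ≤ γ) :
    ∃ R S : Pt, γ = quartic P Q R S := by
  obtain ⟨δ, rfl⟩ := exists_add_of_le hle
  have hδ : len δ = 2 := by
    rw [len_add, len_add, len_single, len_single] at hlen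
    omega
  obtain ⟨R, S, rfl⟩ := exists_eq_single_add_single hδ
  exact ⟨R, S, by rw [quartic, add_assoc _ (Finsupp.single R 1)]⟩

lemma Valid.validPt {γ : Expv} (hγ : Valid A γ) {P : Pt}
    (h : Finsupp.single P 1 ≤ γ) : ValidPt A P :=
  hγ P (Finsupp.mem_support_iff.mpr (by have := h P; rw [Finsupp.single_eq_same] at this; omega))

lemma Valid.validPt_quartic {P Q R S : Pt} (hγ : Valid A (quartic P Q R S)) :
    ValidPt A P ∧ ValidPt A Q ∧ ValidPt A R ∧ ValidPt A S :=
  ⟨hγ.validPt (le_add_right (le_add_right (le_add_right le_rfl))),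
    hγ.validPt (le_add_right (le_add_right (le_add_left le_rfl))),
    hγ.validPt (le_add_right (le_add_left le_rfl)),
    hγ.validPt (le_add_left le_rfl)⟩

lemma validPt_of_lt {g : Fin 3} {n : ℕ} (h₀ : 0 < n) (h : n < A g) : ValidPt A (g, n) :=
  ⟨h₀, Nat.le_sub_one_of_lt h⟩

lemma ValidPt.two_le {P : Pt} (hP : ValidPt A P) : 2 ≤ A P.1 := by
  have := hP.1
  have := hP.2
  omega

end ExponentVectors

section Derivatives

variable {A : Fin 3 → ℕ} {c : Expv → ℕ → ℂ}

lemma dfac_ne_zero (β : Expv) (l : List Pt) : (dfac β l : ℂ) ≠ 0 := by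
  induction l with
  | nil => simp [dfac]
  | cons p ps ih =>
    simp only [dfac, Nat.cast_mul, Finsupp.coe_add, Pi.add_apply, Finsupp.single_eq_same]
    exact mul_ne_zero (by norm_cast) ih

lemma dfac_zero_same_branch (i : Fin 3) (u v w : ℕ) :
    (dfac 0 [(i, u), (i, v), (i, w)] : ℂ) = sFactor u v w := by
  by_cases huv : u = v <;> by_cases hvw : v = w <;> by_cases huw : u = w <;>
    first
      | (exfalso; omega)
      | simp [dfac, sFactor, huv, hvw, huw, eq_comm]

lemma der_pt_pt_pt (P Q R : Pt) (β : Expv) :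
    der A c (.pt P.1 P.2) (.pt Q.1 Q.2) (.pt R.1 R.2) β 0 =
      dfac β [P, Q, R] *
        c (β + Finsupp.single P 1 + Finsupp.single Q 1 + Finsupp.single R 1) 0 := by
  simp [der, muCount, ptsOf, add_assoc]

lemma der_mu_pt_pt (i k : Fin 3) (j l : ℕ) (β : Expv) :
    der A c .mu (.pt i j) (.pt k l) β 0 = 0 := by
  simp [der, muCount]

lemma der_pt_pt_mu (i k : Fin 3) (j l : ℕ) (β : Expv) :
    der A c (.pt i j) (.pt k l) .mu β 0 = 0 := by
  simp [der, muCount]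

lemma der_pt_pt_pt_zero (hcub : CubicValues A c) {P Q R : Pt}
    (hP : ValidPt A P) (hQ : ValidPt A Q) (hR : ValidPt A R) :
    der A c (.pt P.1 P.2) (.pt Q.1 Q.2) (.pt R.1 R.2) 0 0 =
      if P.1 = Q.1 ∧ Q.1 = R.1 ∧ P.2 + Q.2 + R.2 = A P.1 then (A P.1 : ℂ)⁻¹ else 0 := by
  obtain ⟨i, u⟩ := P
  obtain ⟨k, v⟩ := Q
  obtain ⟨l, w⟩ := R
  rw [der_pt_pt_pt, zero_add]
  by_cases hbranch : i = k ∧ k = l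
  · obtain ⟨rfl, rfl⟩ := hbranch
    have hcubic := hcub.2 i u v w hP hQ hR
    simp only [e] at hcubic
    simp only [true_and]
    rw [dfac_zero_same_branch, hcubic]
  · have hmixed := hcub.1 i k l u v w hP hQ hR hbranch
    simp only [e] at hmixed
    rw [hmixed, mul_zero, if_neg (fun h => hbranch ⟨h.1, h.2.1⟩)]

end Derivatives

section Contraction

variable {A : Fin 3 → ℕ} {c : Expv → ℕ → ℂ}

lemma sum_contract_left (hcub : CubicValues A c) {P Q : Pt} (hP : ValidPt A P) (hQ : ValidPt A Q)
    (f : Fin 3 → ℕ → ℂ) :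
    ∑ i : Fin 3, ∑ j ∈ Finset.Icc 1 (A i - 1),
        (A i : ℂ) * der A c (.pt P.1 P.2) (.pt Q.1 Q.2) (.pt i j) 0 0 * f i j =
      if Fusable A P Q then f P.1 (A P.1 - (P.2 + Q.2)) else 0 := by
  have hterm : ∀ i, ∀ j ∈ Finset.Icc 1 (A i - 1),
      (A i : ℂ) * der A c (.pt P.1 P.2) (.pt Q.1 Q.2) (.pt i j) 0 0 * f i j =
        if i = P.1 ∧ j = A P.1 - (P.2 + Q.2) ∧ Fusable A P Q then f i j else 0 := by
    intro i j hj
    rw [Finset.mem_Icc] at hj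
    rw [der_pt_pt_pt_zero hcub hP hQ (R := (i, j)) hj]
    obtain ⟨k, u⟩ := P
    obtain ⟨l, v⟩ := Q
    have hu := hP.1
    split_ifs with h1 h2 h2 <;> simp only [Fusable] at h1 h2
    · obtain ⟨rfl, rfl, hs⟩ := h1
      rw [mul_inv_cancel₀ (by norm_cast; omega), one_mul]
    · obtain ⟨rfl, rfl, hs⟩ := h1
      exact absurd ⟨rfl, by omega, rfl, by omega⟩ h2
    · obtain ⟨rfl, hj', rfl, hs⟩ := h2
      exact absurd ⟨rfl, rfl, by omega⟩ h1
    · rw [mul_zero, zero_mul]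
  rw [Finset.sum_congr rfl fun i _ => Finset.sum_congr rfl (hterm i),
    Fintype.sum_eq_single P.1 fun i hi => Finset.sum_eq_zero fun j _ => if_neg fun h => hi h.1]
  split_ifs with hPQ
  · rw [Finset.sum_eq_single_of_mem (A P.1 - (P.2 + Q.2)) ?_
      fun j _ hj => if_neg fun h => hj h.2.1, if_pos ⟨rfl, rfl, hPQ⟩]
    have := hQ.1
    have := hPQ.2
    rw [Finset.mem_Icc]
    omega
  · exact Finset.sum_eq_zero fun j _ => if_neg fun h => hPQ h.2.2

lemma sum_contract_right (hcub : CubicValues A c) {D E : Pt} (hD : ValidPt A D) (hE : ValidPt A E)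
    (f : Fin 3 → ℕ → ℂ) :
    ∑ i : Fin 3, ∑ j ∈ Finset.Icc 1 (A i - 1),
        (A i : ℂ) * f i j * der A c (.pt i (A i - j)) (.pt D.1 D.2) (.pt E.1 E.2) 0 0 =
      if Fusable A D E then f D.1 (D.2 + E.2) else 0 := by
  have hterm : ∀ i, ∀ j ∈ Finset.Icc 1 (A i - 1),
      (A i : ℂ) * f i j * der A c (.pt i (A i - j)) (.pt D.1 D.2) (.pt E.1 E.2) 0 0 =
        if i = D.1 ∧ j = D.2 + E.2 ∧ Fusable A D E then f i j else 0 := by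
    intro i j hj
    rw [Finset.mem_Icc] at hj
    rw [der_pt_pt_pt_zero hcub (validPt_of_lt (g := i) (by omega) (by omega)) hD hE]
    obtain ⟨k, u⟩ := D
    obtain ⟨l, v⟩ := E
    split_ifs with h1 h2 h2 <;> simp only [Fusable] at h1 h2
    · rw [mul_right_comm, mul_inv_cancel₀ (show (A i : ℂ) ≠ 0 by norm_cast; omega), one_mul]
    · obtain ⟨rfl, rfl, hs⟩ := h1
      exact absurd ⟨rfl, by omega, rfl, by omega⟩ h2
    · obtain ⟨rfl, rfl, rfl, hs⟩ := h2
      exact absurd ⟨rfl, rfl, by omega⟩ h1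
    · rw [mul_zero]
  rw [Finset.sum_congr rfl fun i _ => Finset.sum_congr rfl (hterm i),
    Fintype.sum_eq_single D.1 fun i hi => Finset.sum_eq_zero fun j _ => if_neg fun h => hi h.1]
  split_ifs with hDE
  · rw [Finset.sum_eq_single_of_mem (D.2 + E.2) ?_ fun j _ hj => if_neg fun h => hj h.2.1,
      if_pos ⟨rfl, rfl, hDE⟩]
    have := hD.1
    have := hDE.2
    rw [Finset.mem_Icc]
    omega
  · exact Finset.sum_eq_zero fun j _ => if_neg fun h => hDE h.2.2

end Contraction

section WDVV

variable {A : Fin 3 → ℕ} {c : Expv → ℕ → ℂ}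

lemma sum_antidiagonal_single_one (r : Pt) (f : Expv × Expv → ℂ) :
    ∑ x ∈ Finset.HasAntidiagonal.antidiagonal (Finsupp.single r 1 : Expv), f x =
      f (0, Finsupp.single r 1) + f (Finsupp.single r 1, 0) := by
  rw [Finsupp.antidiagonal_single, Finset.sum_map,
    show Finset.HasAntidiagonal.antidiagonal (1 : ℕ) = {(0, 1), (1, 0)} from rfl,
    Finset.sum_pair (by decide)]
  simp

lemma quadTerm_pt_single (hcub : CubicValues A c) {p q D E : Pt} (hp : ValidPt A p)
    (hq : ValidPt A q) (hD : ValidPt A D) (hE : ValidPt A E) (r : Pt) :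
    quadTerm A c (.pt p.1 p.2) (.pt q.1 q.2) (.pt D.1 D.2) (.pt E.1 E.2) (Finsupp.single r 1) 0 =
      (if Fusable A p q then der A c (.pt (fuse p q).1 (fuse p q).2) (.pt D.1 D.2) (.pt E.1 E.2)
        (Finsupp.single r 1) 0 else 0) +
      (if Fusable A D E then der A c (.pt p.1 p.2) (.pt q.1 q.2) (.pt (fuse D E).1 (fuse D E).2)
        (Finsupp.single r 1) 0 else 0) := by
  unfold quadTerm
  simp only [sum_antidiagonal_single_one, Finset.HasAntidiagonal.antidiagonal_zero,
    Finset.sum_singleton, der_mu_pt_pt, der_pt_pt_mu, mul_zero, zero_mul, zero_add]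
  rw [sum_contract_left hcub hp hq, sum_contract_right hcub hD hE]
  congr 1
  split_ifs with hpq
  · rw [Nat.sub_sub_self hpq.2.le]
    rfl
  · rfl

lemma der_pt_pt_pt_single (P Q R r : Pt) :
    der A c (.pt P.1 P.2) (.pt Q.1 Q.2) (.pt R.1 R.2) (Finsupp.single r 1) 0 =
      dfac (Finsupp.single r 1) [P, Q, R] * c (quartic r P Q R) 0 :=
  der_pt_pt_pt P Q R _

lemma valid_single {r : Pt} (hr : ValidPt A r) : Valid A (Finsupp.single r 1) := by
  intro p hp
  rwa [Finset.mem_singleton.mp (Finsupp.support_single_subset hp)]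

theorem coeff_quartic_eq_zero_of_wdvv (hadm : IsAdmissible A c) (hcub : CubicValues A c)
    {r p q D E : Pt} (hr : ValidPt A r) (hp : ValidPt A p) (hq : ValidPt A q)
    (hD : ValidPt A D) (hE : ValidPt A E) (hDE : Fusable A D E)
    (hpq : Fusable A p q → c (quartic r (fuse p q) D E) 0 = 0)
    (hqE : Fusable A q E → c (quartic r p D (fuse q E)) 0 = 0)
    (hpD : Fusable A p D → c (quartic r (fuse p D) q E) 0 = 0) :
    c (quartic r p q (fuse D E)) 0 = 0 := by
  have hw := hadm.wdvv (.pt p.1 p.2) (.pt q.1 q.2) (.pt D.1 D.2) (.pt E.1 E.2) hp hq hD hE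
    (Finsupp.single r 1) (valid_single hr) 0
  rw [quadTerm_pt_single hcub hp hq hD hE, quadTerm_pt_single hcub hp hD hq hE,
    (ite_eq_right_iff (p := Fusable A p q)).mpr fun h => by
      rw [der_pt_pt_pt_single, hpq h, mul_zero],
    (ite_eq_right_iff (p := Fusable A q E)).mpr fun h => by
      rw [der_pt_pt_pt_single, hqE h, mul_zero],
    (ite_eq_right_iff (p := Fusable A p D)).mpr fun h => by
      rw [der_pt_pt_pt_single, hpD h, mul_zero],
    if_pos hDE, der_pt_pt_pt_single, zero_add, add_zero] at hw
  exact (mul_eq_zero.mp hw).resolve_left (dfac_ne_zero _ _)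

end WDVV

section Reductions

variable {A : Fin 3 → ℕ} {c : Expv → ℕ → ℂ}

theorem coeff_quartic_eq_zero_of_split (hadm : IsAdmissible A c) (hcub : CubicValues A c)
    {r p q : Pt} {g : Fin 3} {n t : ℕ} (hr : ValidPt A r) (hp : ValidPt A p) (hq : ValidPt A q)
    (hw : ValidPt A (g, n)) (ht : 0 < t) (htn : t < n)
    (hpq : Fusable A p q → c (quartic r (fuse p q) (g, t) (g, n - t)) 0 = 0)
    (hqE : Fusable A q (g, n - t) → c (quartic r p (g, t) (fuse q (g, n - t))) 0 = 0)
    (hpD : Fusable A p (g, t) → c (quartic r (fuse p (g, t)) q (g, n - t)) 0 = 0) :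
    c (quartic r p q (g, n)) 0 = 0 := by
  have hn : n ≤ A g - 1 := hw.2
  have hfuse : fuse (g, t) (g, n - t) = (g, n) := by simp only [fuse]; congr 1; omega
  have hsplit : Fusable A (g, t) (g, n - t) := ⟨rfl, (by omega : t + (n - t) < A g)⟩
  exact hfuse ▸ coeff_quartic_eq_zero_of_wdvv hadm hcub hr hp hq (validPt_of_lt ht (by omega))
    (validPt_of_lt (by omega) (by omega)) hsplit hpq hqE hpD

theorem coeff_eq_zero_of_split_one (hadm : IsAdmissible A c) (hcub : CubicValues A c)
    {γ : Expv} {r p q : Pt} {g : Fin 3} {n : ℕ} (hr : ValidPt A r) (hp : ValidPt A p)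
    (hq : ValidPt A q) (hw : ValidPt A (g, n)) (hn : 2 ≤ n) (hpg : p.1 ≠ g) (hqg : q.1 ≠ g)
    (hpq : Fusable A p q → c (quartic r (fuse p q) (g, 1) (g, n - 1)) 0 = 0)
    (hγ : γ = quartic r p q (g, n)) :
    c γ 0 = 0 :=
  hγ ▸ coeff_quartic_eq_zero_of_split hadm hcub hr hp hq hw one_pos (by omega) hpq
    (fun h => absurd h.1 hqg) (fun h => absurd h.1 hpg)

theorem coeff_eq_zero_of_split_same_branch (hadm : IsAdmissible A c)
    (hcub : CubicValues A c) {γ : Expv} {r p : Pt} {g : Fin 3} {m n t : ℕ} (hr : ValidPt A r)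
    (hp : ValidPt A p) (hq : ValidPt A (g, m)) (hw : ValidPt A (g, n)) (hpg : p.1 ≠ g)
    (ht : 0 < t) (htn : t < n)
    (hqE : m + (n - t) < A g → c (quartic r p (g, t) (g, m + (n - t))) 0 = 0)
    (hγ : γ = quartic r p (g, m) (g, n)) :
    c γ 0 = 0 :=
  hγ ▸ coeff_quartic_eq_zero_of_split hadm hcub hr hp hq hw ht htn (fun h => absurd h.1 hpg)
    (fun h => hqE h.2) (fun h => absurd h.1 hpg)

theorem coeff_eq_zero_of_overflow (hadm : IsAdmissible A c) (hcub : CubicValues A c)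
    {γ : Expv} {r p : Pt} {g : Fin 3} {m n : ℕ} (hr : ValidPt A r) (hp : ValidPt A p)
    (hq : ValidPt A (g, m)) (hw : ValidPt A (g, n)) (hpg : p.1 ≠ g) (hmn : A g < m + n)
    (hγ : γ = quartic r p (g, m) (g, n)) :
    c γ 0 = 0 := by
  have hm : 1 ≤ m ∧ m ≤ A g - 1 := hq
  have ht : 0 < m + n - A g := by omega
  have htn : m + n - A g < n := by omega
  exact coeff_eq_zero_of_split_same_branch hadm hcub hr hp hq hw hpg ht htn
    (fun h => absurd h (by omega)) hγ

end Reductions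

section Weights

variable {A : Fin 3 → ℕ}

lemma weight_add_weight (g : Fin 3) (a b : ℕ) :
    weight A (g, a) + weight A (g, b) = weight A (g, a + b) := by
  simp only [weight, Nat.cast_add, add_div]

lemma weight_le_one {g : Fin 3} {n : ℕ} (h : n ≤ A g) : weight A (g, n) ≤ 1 :=
  div_le_one_of_le₀ (by exact_mod_cast h) (Nat.cast_nonneg _)

lemma eq_of_weight_eq_one {g : Fin 3} {n : ℕ} (h : weight A (g, n) = 1) : n = A g := by
  have hA : (A g : ℚ) ≠ 0 := by
    rintro h0
    simp [weight, h0] at h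
  exact_mod_cast (div_eq_one_iff_eq hA).mp h

lemma weight_one_le {g : Fin 3} {k : ℕ} (hk : 0 < k) (h : k ≤ A g) :
    weight A (g, 1) ≤ 1 / k := by
  simp only [weight, Nat.cast_one]
  gcongr

lemma deg_add (α β : Expv) : deg A (α + β) = deg A α + deg A β := by
  unfold deg
  rw [Finsupp.sum_add_index' (fun _ => by simp) (fun _ _ _ => by push_cast; ring)]

lemma deg_single {P : Pt} (hP : ValidPt A P) : deg A (Finsupp.single P 1) = 1 - weight A P := by
  have hA : (A P.1 : ℚ) ≠ 0 := by have := hP.two_le; norm_cast; omega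
  rw [deg, Finsupp.sum_single_index (by simp), weight]
  field_simp
  ring

lemma weight_sum_eq_two {c : Expv → ℕ → ℂ} (hadm : IsAdmissible A c) {P Q R S : Pt}
    (hγ : Valid A (quartic P Q R S)) (hc : c (quartic P Q R S) 0 ≠ 0) :
    weight A P + weight A Q + weight A R + weight A S = 2 := by
  obtain ⟨hP, hQ, hR, hS⟩ := hγ.validPt_quartic
  have h := hadm.homog _ hγ 0 hc
  rw [quartic, deg_add, deg_add, deg_add, deg_single hP, deg_single hQ, deg_single hR,
    deg_single hS] at h
  push_cast at h
  linarith

end Weights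

section TwoBranches

variable {A : Fin 3 → ℕ} {c : Expv → ℕ → ℂ}

theorem coeff_eq_zero_two_plus_two (hadm : IsAdmissible A c) (hcub : CubicValues A c) {γ : Expv}
    {x y : Fin 3} (hxy : x ≠ y) (hx : 3 ≤ A x) {u₁ u₂ v₁ v₂ : ℕ}
    (hu₁ : ValidPt A (x, u₁)) (hu₂ : ValidPt A (x, u₂))
    (hv₁ : ValidPt A (y, v₁)) (hv₂ : ValidPt A (y, v₂))
    (hwt : weight A (x, u₁) + weight A (x, u₂) + weight A (y, v₁) + weight A (y, v₂) = 2)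
    (hγ : γ = quartic (x, u₁) (x, u₂) (y, v₁) (y, v₂)) :
    c γ 0 = 0 := by
  by_cases hu : A x < u₁ + u₂
  · exact coeff_eq_zero_of_overflow hadm hcub hv₁ hv₂ hu₁ hu₂ hxy.symm hu
      (by rw [hγ]; unfold quartic; abel)
  by_cases hv : A y < v₁ + v₂
  · exact coeff_eq_zero_of_overflow hadm hcub hu₁ hu₂ hv₁ hv₂ hxy hv hγ
  have hx1 := weight_add_weight (A := A) x u₁ u₂ ▸ weight_le_one (not_lt.mp hu)
  have hy1 := weight_add_weight (A := A) y v₁ v₂ ▸ weight_le_one (not_lt.mp hv)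
  have hux : u₁ + u₂ = A x :=
    eq_of_weight_eq_one (by rw [← weight_add_weight]; linarith)
  have hvy : v₁ + v₂ = A y :=
    eq_of_weight_eq_one (by rw [← weight_add_weight]; linarith)
  have hnf : ¬Fusable A (y, v₁) (y, v₂) := fun h => absurd h.2 (by dsimp only; omega)
  rcases le_or_gt 2 u₂ with hu₂2 | hu₂1
  · exact coeff_eq_zero_of_split_one hadm hcub hu₁ hv₁ hv₂ hu₂ hu₂2 hxy.symm hxy.symm
      (fun h => absurd h hnf) (by rw [hγ]; unfold quartic; abel)
  · exact coeff_eq_zero_of_split_one hadm hcub hu₂ hv₁ hv₂ hu₁ (by omega) hxy.symm hxy.symm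
      (fun h => absurd h hnf) (by rw [hγ]; unfold quartic; abel)

theorem coeff_eq_zero_one_plus_three (hadm : IsAdmissible A c) (hcub : CubicValues A c) {γ : Expv}
    {x y : Fin 3} (hxy : x ≠ y) (hx : 3 ≤ A x) {u v₁ v₂ v₃ : ℕ} (hu : ValidPt A (x, u))
    (hv₁ : ValidPt A (y, v₁)) (hv₂ : ValidPt A (y, v₂)) (hv₃ : ValidPt A (y, v₃))
    (hwt : weight A (x, u) + weight A (y, v₁) + weight A (y, v₂) + weight A (y, v₃) = 2)
    (hγ : γ = quartic (x, u) (y, v₁) (y, v₂) (y, v₃)) :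
    c γ 0 = 0 := by
  by_cases h₂₃ : A y < v₂ + v₃
  · exact coeff_eq_zero_of_overflow hadm hcub hv₁ hu hv₂ hv₃ hxy h₂₃
      (by rw [hγ]; unfold quartic; abel)
  by_cases h₁₃ : A y < v₁ + v₃
  · exact coeff_eq_zero_of_overflow hadm hcub hv₂ hu hv₁ hv₃ hxy h₁₃
      (by rw [hγ]; unfold quartic; abel)
  by_cases h₁₂ : A y < v₁ + v₂
  · exact coeff_eq_zero_of_overflow hadm hcub hv₃ hu hv₁ hv₂ hxy h₁₂
      (by rw [hγ]; unfold quartic; abel)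
  have hu1 : 1 ≤ u ∧ u ≤ A x - 1 := hu
  have hu2 : 2 ≤ u := by
    by_contra hu2
    obtain rfl : u = 1 := by omega
    have := weight_one_le (A := A) three_pos hx
    have := weight_add_weight (A := A) y v₂ v₃ ▸ weight_le_one (not_lt.mp h₂₃)
    have := weight_add_weight (A := A) y v₁ v₃ ▸ weight_le_one (not_lt.mp h₁₃)
    have := weight_add_weight (A := A) y v₁ v₂ ▸ weight_le_one (not_lt.mp h₁₂)
    norm_num at *
    linarith
  refine coeff_eq_zero_of_split_one hadm hcub hv₁ hv₂ hv₃ hu hu2 hxy.symm hxy.symm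
    (fun h => ?_) (by rw [hγ]; unfold quartic; abel)
  have hv₂' : 1 ≤ v₂ := hv₂.1
  exact coeff_eq_zero_two_plus_two hadm hcub hxy hx (u₂ := u - 1) (v₂ := v₂ + v₃)
    (validPt_of_lt one_pos (by omega))
    (validPt_of_lt (by omega) (by omega)) hv₁ (validPt_of_lt (by omega) (h.2 : v₂ + v₃ < A y))
    (by
      rw [weight_add_weight, Nat.add_sub_cancel' hu1.1, ← weight_add_weight y v₂ v₃]
      linarith)
    (by simp only [quartic, fuse]; abel)

theorem coeff_eq_zero_three_plus_one (hadm : IsAdmissible A c) (hcub : CubicValues A c)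
    {γ : Expv} {x y : Fin 3} (hxy : x ≠ y) (hx : 3 ≤ A x) {u₁ u₂ u₃ v : ℕ}
    (hu₁ : ValidPt A (x, u₁)) (hu₂ : ValidPt A (x, u₂)) (hu₃ : ValidPt A (x, u₃))
    (hv : ValidPt A (y, v))
    (hwt : weight A (x, u₁) + weight A (x, u₂) + weight A (x, u₃) + weight A (y, v) = 2)
    (hγ : γ = quartic (x, u₁) (x, u₂) (x, u₃) (y, v)) :
    c γ 0 = 0 := by
  by_cases h₂₃ : A x < u₂ + u₃
  · exact coeff_eq_zero_of_overflow hadm hcub hu₁ hv hu₂ hu₃ hxy.symm h₂₃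
      (by rw [hγ]; unfold quartic; abel)
  by_cases h₁₃ : A x < u₁ + u₃
  · exact coeff_eq_zero_of_overflow hadm hcub hu₂ hv hu₁ hu₃ hxy.symm h₁₃
      (by rw [hγ]; unfold quartic; abel)
  by_cases h₁₂ : A x < u₁ + u₂
  · exact coeff_eq_zero_of_overflow hadm hcub hu₃ hv hu₁ hu₂ hxy.symm h₁₂
      (by rw [hγ]; unfold quartic; abel)
  have hv' : 1 ≤ v ∧ v ≤ A y - 1 := hv
  have hu₁' : 1 ≤ u₁ ∧ u₁ ≤ A x - 1 := hu₁
  have hu₂' : 1 ≤ u₂ := hu₂.1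
  rcases le_or_gt 2 v with hv2 | hv1
  · refine coeff_eq_zero_of_split_one hadm hcub hu₁ hu₂ hu₃ hv hv2 hxy hxy
      (fun h => ?_) hγ
    exact coeff_eq_zero_two_plus_two hadm hcub hxy hx (u₂ := u₂ + u₃) (v₂ := v - 1) hu₁
      (validPt_of_lt (by omega) (h.2 : u₂ + u₃ < A x)) (validPt_of_lt one_pos (by omega))
      (validPt_of_lt (by omega) (by omega))
      (by
        have := weight_add_weight (A := A) y 1 (v - 1)
        have := weight_add_weight (A := A) x u₂ u₃
        rw [Nat.add_sub_cancel' hv'.1] at *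
        linarith)
      rfl
  obtain rfl : v = 1 := by omega
  -- Left: `u₁ = u₂ = u₃ = a_x / 2` and `a_y = 2`, where every pair of `u`'s sums to `a_x`.
  have hpairs : u₂ + u₃ = A x ∧ u₁ + u₃ = A x ∧ u₁ + u₂ = A x := by
    have := weight_one_le two_pos hv.two_le
    have := weight_add_weight (A := A) x u₂ u₃ ▸ weight_le_one (not_lt.mp h₂₃)
    have := weight_add_weight (A := A) x u₁ u₃ ▸ weight_le_one (not_lt.mp h₁₃)
    have := weight_add_weight (A := A) x u₁ u₂ ▸ weight_le_one (not_lt.mp h₁₂)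
    refine ⟨eq_of_weight_eq_one ?_, eq_of_weight_eq_one ?_, eq_of_weight_eq_one ?_⟩ <;>
      rw [← weight_add_weight] <;> norm_num at * <;> linarith
  refine coeff_eq_zero_of_split_same_branch hadm hcub hu₁ hv hu₂ hu₃ hxy.symm one_pos
    (by omega) (fun h => ?_) (by rw [hγ]; unfold quartic; abel)
  exact coeff_eq_zero_of_overflow hadm hcub (validPt_of_lt (g := x) one_pos (by omega)) hv hu₁
    (validPt_of_lt (by omega) h) hxy.symm (by omega) (by unfold quartic; abel)

end TwoBranches

section Assembly

variable {A : Fin 3 → ℕ} {c : Expv → ℕ → ℂ}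

theorem coeff_eq_zero_three_branches (hadm : IsAdmissible A c) (hcub : CubicValues A c)
    {γ : Expv} {P Q R S : Pt} (hPQ : P.1 ≠ Q.1) (hPR : P.1 ≠ R.1) (hQR : Q.1 ≠ R.1)
    (hP3 : 3 ≤ A P.1) (hP : ValidPt A P) (hQ : ValidPt A Q) (hR : ValidPt A R) (hS : ValidPt A S)
    (hwt : weight A P + weight A Q + weight A R + weight A S = 2)
    (hγ : γ = quartic P Q R S) :
    c γ 0 = 0 := by
  obtain ⟨x, a⟩ := P
  obtain ⟨y, b⟩ := Q
  obtain ⟨z, d⟩ := R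
  obtain ⟨s, n⟩ := S
  dsimp only at hPQ hPR hQR hP3
  have hsplit : 2 ≤ a ∨ 2 ≤ b ∨ 2 ≤ d ∨ 2 ≤ n := by
    have := hP.1; have := hQ.1; have := hR.1; have := hS.1
    by_contra! h
    obtain ⟨rfl, rfl, rfl, rfl⟩ : a = 1 ∧ b = 1 ∧ d = 1 ∧ n = 1 := by omega
    have := weight_one_le three_pos hP3
    have := weight_one_le two_pos hQ.two_le
    have := weight_one_le two_pos hR.two_le
    have := weight_one_le two_pos hS.two_le
    norm_num at *
    linarith
  rcases hsplit with ha | hb | hd | hn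
  · exact coeff_eq_zero_of_split_one hadm hcub hS hQ hR hP ha hPQ.symm hPR.symm
      (fun h => absurd h.1 hQR) (by rw [hγ]; unfold quartic; abel)
  · exact coeff_eq_zero_of_split_one hadm hcub hS hP hR hQ hb hPQ hQR.symm
      (fun h => absurd h.1 hPR) (by rw [hγ]; unfold quartic; abel)
  · exact coeff_eq_zero_of_split_one hadm hcub hS hP hQ hR hd hPR hQR
      (fun h => absurd h.1 hPQ) (by rw [hγ]; unfold quartic; abel)
  have hcover : ∀ s x y z : Fin 3, x ≠ y → x ≠ z → y ≠ z → s = x ∨ s = y ∨ s = z := by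
    decide
  obtain rfl | rfl | rfl := hcover s x y z hPQ hPR hQR
  · exact coeff_eq_zero_of_split_one hadm hcub hP hQ hR hS hn hPQ.symm hPR.symm
      (fun h => absurd h.1 hQR) hγ
  · exact coeff_eq_zero_of_split_one hadm hcub hQ hP hR hS hn hPQ hQR.symm
      (fun h => absurd h.1 hPR) (by rw [hγ]; unfold quartic; abel)
  · exact coeff_eq_zero_of_split_one hadm hcub hR hP hQ hS hn hPR hQR
      (fun h => absurd h.1 hPQ) (by rw [hγ]; unfold quartic; abel)

theorem coeff_quartic_eq_zero (hadm : IsAdmissible A c) (hcub : CubicValues A c)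
    {x y : Fin 3} (hxy : x ≠ y) (hx : 3 ≤ A x) {a b : ℕ} {R S : Pt} (hP : ValidPt A (x, a))
    (hQ : ValidPt A (y, b)) (hR : ValidPt A R) (hS : ValidPt A S)
    (hwt : weight A (x, a) + weight A (y, b) + weight A R + weight A S = 2) :
    c (quartic (x, a) (y, b) R S) 0 = 0 := by
  obtain ⟨z, d⟩ := R
  obtain ⟨s, n⟩ := S
  by_cases hz : z ≠ x ∧ z ≠ y
  · exact coeff_eq_zero_three_branches hadm hcub hxy hz.1.symm hz.2.symm hx hP hQ hR hS hwt rfl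
  by_cases hs : s ≠ x ∧ s ≠ y
  · exact coeff_eq_zero_three_branches hadm hcub hxy hs.1.symm hs.2.symm hx hP hQ hS hR
      (by linarith) (by unfold quartic; abel)
  obtain rfl | rfl : z = x ∨ z = y := by tauto
  · obtain rfl | rfl : s = z ∨ s = y := by tauto
    · exact coeff_eq_zero_three_plus_one hadm hcub hxy hx hP hR hS hQ (by linarith)
        (by unfold quartic; abel)
    · exact coeff_eq_zero_two_plus_two hadm hcub hxy hx hP hR hQ hS (by linarith)
        (by unfold quartic; abel)
  · obtain rfl | rfl : s = x ∨ s = z := by tauto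
    · exact coeff_eq_zero_two_plus_two hadm hcub hxy hx hP hS hQ hR (by linarith)
        (by unfold quartic; abel)
    · exact coeff_eq_zero_one_plus_three hadm hcub hxy hx hP hQ hR hS hwt rfl

end Assembly

theorem weak_separation_length_four_general (A : Fin 3 → ℕ)
    (c : Expv → ℕ → ℂ) (hadm : IsAdmissible A c) (hcub : CubicValues A c)
    (γ : Expv) (hγ : Valid A γ) (hlen : len γ = 4)
    (i₁ i₂ : Fin 3) (j₁ j₂ : ℕ) (hne : i₁ ≠ i₂)
    (hle : e i₁ j₁ + e i₂ j₂ ≤ γ) (ha : 3 ≤ A i₁) :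
    c γ 0 = 0 := by
  obtain ⟨R, S, rfl⟩ := exists_eq_quartic hlen hle
  obtain ⟨hP, hQ, hR, hS⟩ := hγ.validPt_quartic
  by_contra hc
  exact hc (coeff_quartic_eq_zero hadm hcub hne ha hP hQ hR hS
    (weight_sum_eq_two hadm hγ hc))

/-- Lemma 3.5 (weak separation in length 4). -/
theorem weak_separation_length_four (A : Fin 3 → ℕ) (hA : ∀ i, 1 ≤ A i) (hA01 : A 0 ≤ A 1) (hA12 : A 1 ≤ A 2)
    (c : Expv → ℕ → ℂ) (hadm : IsAdmissible A c) (hcub : CubicValues A c)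
    (γ : Expv) (hγ : Valid A γ) (hlen : len γ = 4)
    (i₁ i₂ : Fin 3) (j₁ j₂ : ℕ) (hne : i₁ ≠ i₂)
    (hv₁ : ValidPt A (i₁, j₁)) (hv₂ : ValidPt A (i₂, j₂))
    (hle : e i₁ j₁ + e i₂ j₂ ≤ γ) (ha : 3 ≤ A i₁) :
    c γ 0 = 0 :=
  weak_separation_length_four_general A c hadm hcub γ hγ hlen i₁ i₂ j₁ j₂ hne hle ha

end FrobeniusUniqueness
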